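/- arXiv:1706.06861 — 7 statements merged into one kernel-verified Lean document; each statement's English description precedes it below -/
import Mathlib

section
/- Let Q be a symmetric traceless real 3×3 matrix and let s ∈ ℝ. If |Q|² = 2s²/3 and det Q = 2s³/27, then Q is uniaxial with scalar order parameter s, i.e., there exists a unit vector n ∈ S² such that Q = s(n⊗n − (1/3)I). -/
/-!
By Cayley–Hamilton, the traceless `Q` satisfies
`Q³ - (s²/3) Q - 2s³/27 = (Q - 2s/3)(Q + s/3)² = 0`, so the symmetric matrix
`M = (Q - 2s/3)(Q + s/3)` has `M² = 0`; then `tr (Mᵀ M) = 0` and `M = 0`.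
For `s ≠ 0` this says that `P = Q/s + I/3` is a symmetric idempotent of trace `1`, i.e. the
orthogonal projection onto a line `ℝ n` with `|n| = 1`, so `P = n ⊗ n`.
For `s = 0` it says `Q² = 0`, hence `Q = 0`.
-/

open Matrix

namespace Matrix

variable {n : Type*} [Fintype n] {A : Matrix n n ℝ}

theorem IsSymm.eq_zero_of_trace_mul_self_eq_zero (hA : A.IsSymm) (h : (A * A).trace = 0) :
    A = 0 := by
  rwa [← trace_conjTranspose_mul_self_eq_zero_iff, conjTranspose_eq_transpose_of_trivial, hA.eq]

theorem IsSymm.eq_zero_of_isIdempotentElem_of_trace_eq_zero (hA : A.IsSymm)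
    (hidem : IsIdempotentElem A) (h : A.trace = 0) : A = 0 :=
  hA.eq_zero_of_trace_mul_self_eq_zero (by rwa [hidem.eq])

theorem isIdempotentElem_vecMulVec {v : n → ℝ} (hv : v ⬝ᵥ v = 1) :
    IsIdempotentElem (vecMulVec v v) := by
  rw [IsIdempotentElem, vecMulVec_mul_vecMulVec, hv, one_smul]

theorem IsSymm.isIdempotentElem_sub_vecMulVec (hA : A.IsSymm) (hidem : IsIdempotentElem A)
    {v : n → ℝ} (hAv : A *ᵥ v = v) (hv : v ⬝ᵥ v = 1) :
    IsIdempotentElem (A - vecMulVec v v) := by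
  have hvA : v ᵥ* A = v := by rw [← mulVec_transpose, hA.eq, hAv]
  exact (isIdempotentElem_vecMulVec hv).sub hidem (by rw [vecMulVec_mul, hvA])
    (by rw [mul_vecMulVec, hAv])

theorem IsSymm.exists_eq_vecMulVec_of_isIdempotentElem_of_trace_eq_one (hA : A.IsSymm)
    (hidem : IsIdempotentElem A) (htr : A.trace = 1) :
    ∃ v : n → ℝ, v ⬝ᵥ v = 1 ∧ A = vecMulVec v v := by
  obtain ⟨j, -, hj⟩ : ∃ j ∈ Finset.univ, (0 : ℝ) < A j j :=
    Finset.exists_lt_of_sum_lt (by simpa [trace] using (htr ▸ one_pos : 0 < A.trace))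
  -- the normalised `j`-th column of `A` spans its range
  set u : n → ℝ := fun i => A i j
  have hAu : A *ᵥ u = u := funext fun i => by
    simpa [u, mulVec, dotProduct, mul_apply] using congrFun (congrFun hidem.eq i) j
  have huu : u ⬝ᵥ u = A j j := by
    simpa [u, mul_apply, dotProduct, hA.apply] using congrFun (congrFun hidem.eq j) j
  set v := (√(A j j))⁻¹ • u
  have hv : v ⬝ᵥ v = 1 := by
    rw [smul_dotProduct, dotProduct_smul, huu, smul_smul, smul_eq_mul, ← sq, inv_pow,
      Real.sq_sqrt hj.le, inv_mul_cancel₀ hj.ne']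
  have hAv : A *ᵥ v = v := by rw [mulVec_smul, hAu]
  refine ⟨v, hv, sub_eq_zero.mp ?_⟩
  refine (hA.sub ?_).eq_zero_of_isIdempotentElem_of_trace_eq_zero
    (hA.isIdempotentElem_sub_vecMulVec hidem hAv hv) ?_
  · exact transpose_vecMulVec v v
  · rw [trace_sub, trace_vecMulVec, htr, hv, sub_self]

theorem cayley_hamilton_fin_three_of_trace_eq_zero {R : Type*} [CommRing R]
    {Q : Matrix (Fin 3) (Fin 3) R} (htr : Q.trace = 0) :
    2 • (Q * (Q * Q)) = (Q * Q).trace • Q + (2 * Q.det) • 1 := by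
  have h22 : Q 2 2 = -Q 0 0 - Q 1 1 := by
    simp only [trace, diag, Fin.sum_univ_three] at htr
    linear_combination htr
  ext i j
  fin_cases i <;> fin_cases j <;>
    simp [mul_apply, Fin.sum_univ_three, trace, det_fin_three, h22] <;> ring

end Matrix

-- `x³ - (s²/3) x - 2s³/27 = (x - 2s/3)(x + s/3)²` divides `((x - 2s/3)(x + s/3))²`.
theorem sq_eq_zero_of_mul_self_mul_self_eq {A : Type*} [Ring A] [Algebra ℝ A] {q : A} {s : ℝ}
    (h : q * (q * q) = (s ^ 2 / 3) • q + (2 * s ^ 3 / 27) • 1) :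
    (q * q - (s / 3) • q - (2 * s ^ 2 / 9) • 1) ^ 2 = 0 := by
  simp only [sq, mul_sub, sub_mul, smul_mul_assoc, mul_smul_comm, mul_one, one_mul, mul_assoc, h,
    mul_add, smul_add, smul_smul]
  match_scalars <;> ring

theorem Matrix.IsSymm.mul_self_eq_of_trace_of_det {Q : Matrix (Fin 3) (Fin 3) ℝ} (hQ : Q.IsSymm)
    (htr : Q.trace = 0) {s : ℝ} (hsq : (Q * Q).trace = 2 * s ^ 2 / 3)
    (hdet : Q.det = 2 * s ^ 3 / 27) :
    Q * Q = (s / 3) • Q + (2 * s ^ 2 / 9) • 1 := by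
  have hcube : Q * (Q * Q) = (s ^ 2 / 3) • Q + (2 * s ^ 3 / 27) • 1 := by
    have h := cayley_hamilton_fin_three_of_trace_eq_zero htr
    rw [two_nsmul, hsq, hdet] at h
    linear_combination (norm := module) (2⁻¹ : ℝ) • h
  have hsymm : (Q * Q - (s / 3) • Q - (2 * s ^ 2 / 9) • 1).IsSymm := by
    simpa only [sq Q] using ((hQ.pow 2).sub (hQ.smul (s / 3))).sub (isSymm_one.smul (2 * s ^ 2 / 9))
  rw [← sub_eq_zero, ← sub_sub]
  exact hsymm.eq_zero_of_trace_mul_self_eq_zero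
    (by rw [← sq, sq_eq_zero_of_mul_self_mul_self_eq hcube, trace_zero])

theorem uniaxial_of_invariants (Q : Matrix (Fin 3) (Fin 3) ℝ)
    (hsymm : Q.IsSymm) (htr : Q.trace = 0) (s : ℝ)
    (hnorm : (Qᵀ * Q).trace = 2 * s ^ 2 / 3) (hdet : Q.det = 2 * s ^ 3 / 27) :
    ∃ n : Fin 3 → ℝ, n ⬝ᵥ n = 1 ∧ Q = s • (vecMulVec n n - (3:ℝ)⁻¹ • 1) := by
  rw [hsymm.eq] at hnorm
  have hQQ := hsymm.mul_self_eq_of_trace_of_det htr hnorm hdet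
  rcases eq_or_ne s 0 with rfl | hs
  · have hQ : Q = 0 := hsymm.eq_zero_of_trace_mul_self_eq_zero (by simp [hQQ])
    exact ⟨Pi.single 0 1, by simp, by simp [hQ]⟩
  set P := s⁻¹ • Q + (3 : ℝ)⁻¹ • 1
  have hP : IsIdempotentElem P := by
    simp only [IsIdempotentElem, P, mul_add, add_mul, smul_mul_smul, mul_one, one_mul, hQQ,
      smul_add, smul_smul]
    match_scalars <;> field_simp <;> ring
  have hPsymm : P.IsSymm := (hsymm.smul _).add (isSymm_one.smul _)
  obtain ⟨n, hn, hPn⟩ :=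
    hPsymm.exists_eq_vecMulVec_of_isIdempotentElem_of_trace_eq_one hP (by simp [P, htr])
  refine ⟨n, hn, ?_⟩
  rw [← hPn, add_sub_cancel_right, smul_smul, mul_inv_cancel₀ hs, one_smul]
end

section
/- A symmetric traceless real 3×3 matrix Q is uniaxial with scalar order parameter s ∈ [−1/2, 1] (i.e., Q = s(n⊗n − (1/3)I) for some unit vector n) if and only if |Q|⁶ = 54(det Q)² and det Q ∈ (2/27)·[−1/8, 1]. -/
open Matrix

lemma outer_col (U : Matrix (Fin 3) (Fin 3) ℝ) (k : Fin 3) :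
    U * diagonal (Pi.single k 1) * star U
      = vecMulVec (fun i => U i k) (fun i => U i k) := by
  ext a b
  simp [mul_apply, diagonal_apply, Pi.single_apply, vecMulVec_apply, Finset.sum_ite_eq,
    mul_comm]

lemma rep_facts (d : Fin 3 → ℝ) (k : Fin 3) (l : ℝ) (hl : ∀ x, x ≠ k → d x = l)
    (hsum : d 0 + d 1 + d 2 = 0) :
    d 0 * d 1 * d 2 = -2 * l ^ 3 ∧ d k = -2 * l := by
  fin_cases k
  · have h1 := hl 1 (by decide); have h2 := hl 2 (by decide)
    simp_all
    have h0 : d 0 = -2 * l := by linarith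
    rw [h0]; constructor <;> ring
  · have h1 := hl 0 (by decide); have h2 := hl 2 (by decide)
    simp_all
    have h0 : d 1 = -2 * l := by linarith
    rw [h0]; constructor <;> ring
  · have h1 := hl 0 (by decide); have h2 := hl 1 (by decide)
    simp_all
    have h0 : d 2 = -2 * l := by linarith
    rw [h0]; constructor <;> ring

lemma uniaxial_of_rep (Q U : Matrix (Fin 3) (Fin 3) ℝ) (d : Fin 3 → ℝ)
    (hU : U ∈ Matrix.unitaryGroup (Fin 3) ℝ)
    (hspec : Q = U * diagonal d * star U)
    (k : Fin 3) (l : ℝ) (hl : ∀ x, x ≠ k → d x = l)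
    (hsum : d 0 + d 1 + d 2 = 0) :
    ∃ n : Fin 3 → ℝ, n ⬝ᵥ n = 1 ∧
      Q = (d k - l) • (vecMulVec n n - (3:ℝ)⁻¹ • 1) := by
  set n : Fin 3 → ℝ := fun i => U i k with hn
  have hunit : n ⬝ᵥ n = 1 := by
    have h := (Matrix.mem_unitaryGroup_iff').mp hU
    have := congrFun (congrFun h k) k
    simpa [mul_apply, dotProduct, star_apply, mul_comm, one_apply, hn] using this
  refine ⟨n, hunit, ?_⟩
  have hk : d k = -2 * l := (rep_facts d k l hl hsum).2
  have hd : diagonal d = l • (1 : Matrix (Fin 3) (Fin 3) ℝ)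
      + (d k - l) • diagonal (Pi.single k 1) := by
    ext a b
    by_cases hab : a = b
    · subst hab
      by_cases hak : a = k
      · subst hak; simp
      · simp [diagonal_apply, Pi.single_apply, hak, hl a hak, one_apply]
    · simp [diagonal_apply, hab, Pi.single_apply, one_apply]
  have hQ2 : Q = l • (1 : Matrix (Fin 3) (Fin 3) ℝ) + (d k - l) • vecMulVec n n := by
    rw [hspec, hd]
    rw [Matrix.mul_add, Matrix.add_mul, Matrix.mul_smul, Matrix.smul_mul,
      Matrix.mul_smul, Matrix.smul_mul, Matrix.mul_one,
      (Matrix.mem_unitaryGroup_iff).mp hU, outer_col]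
  rw [hQ2, smul_sub, smul_smul]
  rw [show (d k - l) * (3:ℝ)⁻¹ = -l by rw [hk]; ring]
  module

theorem uniaxial_iff_invariants (Q : Matrix (Fin 3) (Fin 3) ℝ)
    (hsymm : Q.IsSymm) (htr : Q.trace = 0) :
    (∃ s : ℝ, s ∈ Set.Icc (-(1/2) : ℝ) 1 ∧ ∃ n : Fin 3 → ℝ, n ⬝ᵥ n = 1 ∧
        Q = s • (vecMulVec n n - (3:ℝ)⁻¹ • 1)) ↔
      ((Qᵀ * Q).trace ^ 3 = 54 * Q.det ^ 2 ∧
        Q.det ∈ Set.Icc ((2/27 : ℝ) * (-(1/8))) ((2/27 : ℝ) * 1)) := by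
  constructor
  · rintro ⟨s, hs, n, hn, rfl⟩
    simp only [dotProduct, Fin.sum_univ_three] at hn
    have hT : (((s • (vecMulVec n n - (3:ℝ)⁻¹ • 1)))ᵀ
        * (s • (vecMulVec n n - (3:ℝ)⁻¹ • 1))).trace = 2/3 * s ^ 2 := by
      simp only [Matrix.trace_fin_three, Matrix.mul_apply, Fin.sum_univ_three,
        Matrix.transpose_apply, Matrix.smul_apply, Matrix.sub_apply, Matrix.vecMulVec_apply,
        Matrix.one_apply, smul_eq_mul]
      norm_num [Fin.ext_iff]
      linear_combination (s^2 * ((n 0 * n 0 + n 1 * n 1 + n 2 * n 2) + 1/3)) * hn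
    have hD : (s • (vecMulVec n n - (3:ℝ)⁻¹ • 1)).det = 2/27 * s ^ 3 := by
      simp only [Matrix.det_fin_three, Matrix.smul_apply, Matrix.sub_apply,
        Matrix.vecMulVec_apply, Matrix.one_apply, smul_eq_mul]
      norm_num [Fin.ext_iff]
      linear_combination (s^3 / 9) * hn
    rw [hT, hD]
    obtain ⟨hs1, hs2⟩ := hs
    refine ⟨by ring, ?_, ?_⟩
    · nlinarith [sq_nonneg (2*s + 1), sq_nonneg (2*s - 1), sq_nonneg s]
    · nlinarith [sq_nonneg (s + 1), sq_nonneg (s - 1), sq_nonneg s]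
  · rintro ⟨hS, hdl, hdu⟩
    have hH : Q.IsHermitian := by
      rw [Matrix.IsHermitian, conjTranspose_eq_transpose_of_trivial]; exact hsymm
    set U : Matrix (Fin 3) (Fin 3) ℝ := (hH.eigenvectorUnitary : Matrix (Fin 3) (Fin 3) ℝ)
      with hUdef
    set d : Fin 3 → ℝ := hH.eigenvalues with hddef
    have hU : U ∈ Matrix.unitaryGroup (Fin 3) ℝ := hH.eigenvectorUnitary.2
    have hspec : Q = U * diagonal d * star U := by
      have := hH.spectral_theorem
      simpa [RCLike.ofReal_real_eq_id] using this
    have hdet : Q.det = d 0 * d 1 * d 2 := by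
      have := hH.det_eq_prod_eigenvalues
      simpa [Fin.prod_univ_three] using this
    have hsum : d 0 + d 1 + d 2 = 0 := by
      rw [← htr, hspec, Matrix.trace_mul_comm, ← Matrix.mul_assoc,
        (Matrix.mem_unitaryGroup_iff').mp hU, Matrix.one_mul, Matrix.trace_diagonal,
        Fin.sum_univ_three]
    have hQT : Qᵀ = Q := hsymm
    have htrsq : (Qᵀ * Q).trace = d 0 ^ 2 + d 1 ^ 2 + d 2 ^ 2 := by
      rw [hQT]
      have key : Q * Q = U * (diagonal d * diagonal d) * star U := by
        rw [hspec]
        calc U * diagonal d * star U * (U * diagonal d * star U)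
            = U * diagonal d * ((star U * U) * (diagonal d * star U)) := by
              simp only [Matrix.mul_assoc]
          _ = U * (diagonal d * diagonal d) * star U := by
              rw [(Matrix.mem_unitaryGroup_iff').mp hU, Matrix.one_mul]
              simp only [Matrix.mul_assoc]
      rw [key, Matrix.trace_mul_comm, ← Matrix.mul_assoc,
        (Matrix.mem_unitaryGroup_iff').mp hU, Matrix.one_mul,
        Matrix.diagonal_mul_diagonal, Matrix.trace_diagonal, Fin.sum_univ_three]
      ring
    rw [htrsq, hdet] at hS
    have h2 : d 2 = -(d 0 + d 1) := by linarith
    have key : ((d 0 - d 1) * (d 1 - d 2) * (d 0 - d 2)) ^ 2 = 0 := by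
      rw [h2] at hS ⊢; linear_combination (1/2) * hS
    have key2 : (d 0 - d 1) * (d 1 - d 2) * (d 0 - d 2) = 0 :=
      pow_eq_zero_iff (n := 2) (by norm_num) |>.mp key
    have finish : ∀ k : Fin 3, ∀ l : ℝ, (∀ x, x ≠ k → d x = l) →
        (∃ s : ℝ, s ∈ Set.Icc (-(1/2) : ℝ) 1 ∧ ∃ n : Fin 3 → ℝ, n ⬝ᵥ n = 1 ∧
          Q = s • (vecMulVec n n - (3:ℝ)⁻¹ • 1)) := by
      intro k l hl
      obtain ⟨n, hn, hQeq⟩ := uniaxial_of_rep Q U d hU hspec k l hl hsum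
      obtain ⟨hprod, hk⟩ := rep_facts d k l hl hsum
      have hdl' : l ^ 3 ≤ 1/216 := by rw [hdet, hprod] at hdl; linarith
      have hdu' : -(1/27) ≤ l ^ 3 := by rw [hdet, hprod] at hdu; linarith
      refine ⟨d k - l, ⟨?_, ?_⟩, n, hn, hQeq⟩ <;> rw [hk]
      · nlinarith [sq_nonneg (l + 1/12), sq_nonneg l, sq_nonneg (l - 1/6)]
      · nlinarith [sq_nonneg (l - 1/6), sq_nonneg l, sq_nonneg (l + 1/3)]
    rcases mul_eq_zero.mp key2 with h | h
    · rcases mul_eq_zero.mp h with h' | h'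
      · refine finish 2 (d 0) ?_
        intro x hx; fin_cases x
        · rfl
        · show d 1 = d 0; linarith
        · exact absurd rfl hx
      · refine finish 0 (d 1) ?_
        intro x hx; fin_cases x
        · exact absurd rfl hx
        · rfl
        · show d 2 = d 1; linarith
    · refine finish 1 (d 0) ?_
      intro x hx; fin_cases x
      · rfl
      · exact absurd rfl hx
      · show d 2 = d 0; linarith
end

section
/- For any symmetric traceless real 3×3 matrix Q, tr(Q⁴) = (1/2)(tr Q²)². -/
theorem trace_pow_four_of_symm_traceless (Q : Matrix (Fin 3) (Fin 3) ℝ)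
    (hsymm : Q.IsSymm) (htr : Q.trace = 0) :
    (Q ^ 4).trace = (1/2 : ℝ) * (Q ^ 2).trace ^ 2 := by
  have hs : ∀ i j, Q j i = Q i j := fun i j => hsymm.apply i j
  have h10 := hs 0 1
  have h20 := hs 0 2
  have h21 := hs 1 2
  have htr' : Q 2 2 = -(Q 0 0 + Q 1 1) := by
    simp [Matrix.trace, Fin.sum_univ_succ, Matrix.diag] at htr
    linarith
  simp only [show (4:ℕ) = 2+2 from rfl, show (2:ℕ) = 1+1 from rfl, pow_succ, pow_zero,
    one_mul, Matrix.trace, Matrix.mul_apply, Fin.sum_univ_three,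
    Matrix.diag, add_zero]
  rw [h10, h20, h21, htr']
  ring
end

section
/- Let f be a function on real symmetric 3×3 matrices satisfying f(RQRᵀ) = f(Q) for all R ∈ SO(3). Then there exists a function g such that f(Q) = g(tr Q, tr Q², tr Q³) for all symmetric Q. -/
/-!
Conjugating by an orthogonal matrix diagonalizes a symmetric `Q`, so an isotropic `f` depends
only on the eigenvalues of `Q`. In dimension three `-1` is orthogonal of determinant `-1` and
acts trivially by conjugation, so invariance under `SO(3)` already gives invariance under `O(3)`.
Finally, by Newton's identities the power sums `tr Q^k = ∑ λᵢ^k`, `k = 1, 2, 3`, determine the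
elementary symmetric functions of the eigenvalues, hence the characteristic polynomial, hence
the (sorted) eigenvalues.
-/

open Matrix Polynomial Finset

section Newton

variable {K ι : Type*} [Field K] [CharZero K] [Fintype ι]

theorem esymm_map_univ_eq_of_sum_pow_eq {x y : ι → K}
    (h : ∀ k ∈ Icc 1 (Fintype.card ι), ∑ i, x i ^ k = ∑ i, y i ^ k) :
    ∀ k ≤ Fintype.card ι, (univ.val.map x).esymm k = (univ.val.map y).esymm k := by
  intro k
  induction k using Nat.strong_induction_on with
  | _ k ih =>
  intro hk
  rcases Nat.eq_zero_or_pos k with rfl | hk0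
  · simp [Multiset.esymm]
  have newton (z : ι → K) : (k : K) * (univ.val.map z).esymm k = (-1) ^ (k + 1) *
      ∑ a ∈ antidiagonal k with a.1 < k,
        (-1) ^ a.1 * (univ.val.map z).esymm a.1 * ∑ i, z i ^ a.2 := by
    simpa only [map_mul, map_sum, map_pow, map_neg, map_one, map_natCast, MvPolynomial.aeval_X,
      MvPolynomial.aeval_esymm_eq_multiset_esymm, MvPolynomial.psum] using
      congrArg (MvPolynomial.aeval z) (MvPolynomial.mul_esymm_eq_sum ι K k)
  refine mul_left_cancel₀ (Nat.cast_ne_zero.2 hk0.ne') ?_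
  rw [newton, newton]
  congr 1
  refine sum_congr rfl fun a ha => ?_
  rw [mem_filter, HasAntidiagonal.mem_antidiagonal] at ha
  rw [ih a.1 ha.2 (by omega), h a.2 (mem_Icc.2 ⟨by omega, by omega⟩)]

theorem prod_X_sub_C_eq_of_sum_pow_eq {x y : ι → K}
    (h : ∀ k ∈ Icc 1 (Fintype.card ι), ∑ i, x i ^ k = ∑ i, y i ^ k) :
    ∏ i, (X - C (x i)) = ∏ i, (X - C (y i)) := by
  have vieta (z : ι → K) : ∏ i, (X - C (z i)) = ∑ j ∈ range (Fintype.card ι + 1),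
      (-1) ^ j * (C ((univ.val.map z).esymm j) * X ^ (Fintype.card ι - j)) := by
    simpa using Multiset.prod_X_sub_X_eq_sum_esymm (univ.val.map z)
  rw [vieta, vieta]
  refine sum_congr rfl fun j hj => ?_
  rw [esymm_map_univ_eq_of_sum_pow_eq h j (Nat.lt_succ_iff.1 (mem_range.1 hj))]

end Newton

namespace Matrix.IsHermitian

variable {𝕜 n : Type*} [RCLike 𝕜] [Fintype n] [DecidableEq n] {A B : Matrix n n 𝕜}

theorem trace_pow_eq_sum_eigenvalues_pow (hA : A.IsHermitian) (k : ℕ) :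
    (A ^ k).trace = ∑ i, (hA.eigenvalues i : 𝕜) ^ k := by
  conv_lhs => rw [hA.spectral_theorem]
  rw [← map_pow, Unitary.conjStarAlgAut_apply, trace_mul_cycle, Unitary.coe_star_mul_self,
    one_mul, diagonal_pow, trace_diagonal]
  rfl

theorem eigenvalues_eq_of_trace_pow_eq (hA : A.IsHermitian) (hB : B.IsHermitian)
    (h : ∀ k ∈ Icc 1 (Fintype.card n), (A ^ k).trace = (B ^ k).trace) :
    hA.eigenvalues = hB.eigenvalues := by
  rw [hA.eigenvalues_eq_eigenvalues_iff, hA.charpoly_eq, hB.charpoly_eq]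
  refine prod_X_sub_C_eq_of_sum_pow_eq fun k hk => ?_
  rw [← trace_pow_eq_sum_eigenvalues_pow, ← trace_pow_eq_sum_eigenvalues_pow, h k hk]

end Matrix.IsHermitian

theorem Matrix.neg_mem_specialOrthogonalGroup_of_odd {n R : Type*} [Fintype n] [DecidableEq n]
    [CommRing R] [NoZeroDivisors R] (hn : Odd (Fintype.card n)) {A : Matrix n n R}
    (hA : A ∈ orthogonalGroup n R) (hdet : A.det ≠ 1) : -A ∈ specialOrthogonalGroup n R := by
  have hAA := (mem_orthogonalGroup_iff' n R).1 hA
  have hdet_sq : A.det * A.det = 1 := by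
    simpa [det_transpose] using congrArg det hAA
  have hdet_neg : A.det = -1 := (mul_self_eq_one_iff.1 hdet_sq).resolve_left hdet
  refine mem_specialOrthogonalGroup_iff.2 ⟨(mem_orthogonalGroup_iff' n R).2 ?_, ?_⟩
  · simpa using hAA
  · rw [det_neg, hn.neg_one_pow, hdet_neg, neg_one_mul, neg_neg]

def IsIsotropicUnder {n : Type*} [Fintype n] [DecidableEq n] (G : Submonoid (Matrix n n ℝ))
    (f : Matrix n n ℝ → ℝ) : Prop :=
  ∀ R ∈ G, ∀ Q : Matrix n n ℝ, Q.IsSymm → f (R * Q * Rᵀ) = f Q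

namespace IsIsotropicUnder

variable {n : Type*} [Fintype n] [DecidableEq n] {f : Matrix n n ℝ → ℝ}

theorem orthogonal_of_odd (hn : Odd (Fintype.card n))
    (hf : IsIsotropicUnder (specialOrthogonalGroup n ℝ) f) :
    IsIsotropicUnder (orthogonalGroup n ℝ) f := by
  intro R hR Q hQ
  by_cases hdet : R.det = 1
  · exact hf R (mem_specialOrthogonalGroup_iff.2 ⟨hR, hdet⟩) Q hQ
  · simpa using hf (-R) (neg_mem_specialOrthogonalGroup_of_odd hn hR hdet) Q hQ

variable (hf : IsIsotropicUnder (orthogonalGroup n ℝ) f)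
include hf

theorem apply_eq_apply_diagonal_eigenvalues {A : Matrix n n ℝ} (hA : A.IsHermitian) :
    f A = f (diagonal hA.eigenvalues) := by
  rw [← hf _ hA.eigenvectorUnitary.2 _ (isSymm_diagonal hA.eigenvalues)]
  conv_lhs => rw [hA.spectral_theorem]
  simp [Unitary.conjStarAlgAut_apply, star_eq_conjTranspose]

theorem apply_eq_of_trace_pow_eq {A B : Matrix n n ℝ} (hA : A.IsSymm) (hB : B.IsSymm)
    (h : ∀ k ∈ Icc 1 (Fintype.card n), (A ^ k).trace = (B ^ k).trace) : f A = f B := by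
  have hA' : A.IsHermitian := isHermitian_iff_isSymm.2 hA
  have hB' : B.IsHermitian := isHermitian_iff_isSymm.2 hB
  rw [hf.apply_eq_apply_diagonal_eigenvalues hA', hf.apply_eq_apply_diagonal_eigenvalues hB',
    hA'.eigenvalues_eq_of_trace_pow_eq hB' h]

end IsIsotropicUnder

theorem isotropic_function_representation (f : Matrix (Fin 3) (Fin 3) ℝ → ℝ)
    (hiso : ∀ R : Matrix (Fin 3) (Fin 3) ℝ, Rᵀ * R = 1 → R.det = 1 →
      ∀ Q : Matrix (Fin 3) (Fin 3) ℝ, Q.IsSymm → f (R * Q * Rᵀ) = f Q) :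
    ∃ g : ℝ → ℝ → ℝ → ℝ, ∀ Q : Matrix (Fin 3) (Fin 3) ℝ, Q.IsSymm →
      f Q = g Q.trace (Q ^ 2).trace (Q ^ 3).trace := by
  have hO : IsIsotropicUnder (orthogonalGroup (Fin 3) ℝ) f :=
    IsIsotropicUnder.orthogonal_of_odd (by decide) fun R hR ↦
      hiso R ((mem_orthogonalGroup_iff' _ _).1 hR.1) hR.2
  let traces (Q : {Q : Matrix (Fin 3) (Fin 3) ℝ // Q.IsSymm}) : ℝ × ℝ × ℝ :=
    (Q.1.trace, (Q.1 ^ 2).trace, (Q.1 ^ 3).trace)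
  have hfactor : Function.FactorsThrough (f ∘ Subtype.val) traces := by
    rintro ⟨A, hA⟩ ⟨B, hB⟩ h
    simp only [traces, Prod.mk.injEq] at h
    obtain ⟨h1, h2, h3⟩ := h
    refine hO.apply_eq_of_trace_pow_eq hA hB fun k hk ↦ ?_
    obtain ⟨hk1, hk3⟩ := mem_Icc.1 hk
    rw [Fintype.card_fin] at hk3
    interval_cases k <;> simpa
  exact ⟨fun a b c ↦ Function.extend traces (f ∘ Subtype.val) 0 (a, b, c),
    fun Q hQ ↦ (hfactor.extend_apply 0 ⟨Q, hQ⟩).symm⟩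
end

section
/- Let μ be a Borel probability measure on S² with Q-tensor Q = ∫(p⊗p − (1/3)I)dμ(p), and suppose the minimum eigenvalue of Q equals −1/3 with unit eigenvector e. Then μ is supported on the great circle {p ∈ S² : p·e = 0}. -/
open Matrix MeasureTheory

theorem supported_on_great_circle_of_min_eigenvalue (μ : Measure (Fin 3 → ℝ))
    [IsProbabilityMeasure μ] (hsph : μ {p | p ⬝ᵥ p = 1} = 1)
    (Q : Matrix (Fin 3) (Fin 3) ℝ)
    (hQ : Q = Matrix.of fun i j =>
      (∫ p, p i * p j ∂μ) - if i = j then (3:ℝ)⁻¹ else 0)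
    (e : Fin 3 → ℝ) (he : e ⬝ᵥ e = 1)
    (heig : Q.mulVec e = (-(1/3) : ℝ) • e) :
    μ {p | p ⬝ᵥ e ≠ 0} = 0 := by
  -- a.e. p lies on the sphere
  have hmeas : MeasurableSet {p : Fin 3 → ℝ | p ⬝ᵥ p = 1} := by
    have : Continuous fun p : Fin 3 → ℝ => p ⬝ᵥ p := by
      unfold dotProduct
      exact continuous_finset_sum _ fun i _ => (continuous_apply i).mul (continuous_apply i)
    exact (isClosed_eq this continuous_const).measurableSet
  have hae : ∀ᵐ p ∂μ, p ⬝ᵥ p = 1 := by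
    rw [ae_iff]
    have := measure_compl hmeas (measure_ne_top μ _)
    simp only [hsph, measure_univ, tsub_self] at this
    simpa [Set.compl_setOf] using this
  -- bounds on the sphere
  have hbd : ∀ᵐ p ∂μ, ∀ i j : Fin 3, ‖p i * p j‖ ≤ 1 := by
    filter_upwards [hae] with p hp i j
    have hsq : ∀ k : Fin 3, p k * p k ≤ 1 := by
      intro k
      rw [← hp]
      unfold dotProduct
      exact Finset.single_le_sum (fun l _ => mul_self_nonneg (p l)) (Finset.mem_univ k)
    have h1 : ∀ k : Fin 3, |p k| ≤ 1 := by
      intro k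
      have := hsq k
      nlinarith [abs_nonneg (p k), sq_abs (p k), sq_nonneg (|p k| - 1)]
    calc ‖p i * p j‖ = |p i| * |p j| := by rw [Real.norm_eq_abs, abs_mul]
      _ ≤ 1 * 1 := mul_le_mul (h1 i) (h1 j) (abs_nonneg _) zero_le_one
      _ = 1 := one_mul 1
  have hint : ∀ i j : Fin 3, Integrable (fun p => p i * p j) μ := by
    intro i j
    refine Integrable.mono' (integrable_const 1) ?_ ?_
    · exact ((continuous_apply i).mul (continuous_apply j)).aestronglyMeasurable
    · filter_upwards [hbd] with p hp using hp i j
  -- the function (p ⬝ᵥ e)^2 as a finite sum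
  have expand : ∀ p : Fin 3 → ℝ,
      (p ⬝ᵥ e) ^ 2 = ∑ i, ∑ j, (e i * e j) * (p i * p j) := by
    intro p
    rw [dotProduct, sq, Finset.sum_mul_sum]
    exact Finset.sum_congr rfl fun i _ => Finset.sum_congr rfl fun j _ => by ring
  have hintij : ∀ i j : Fin 3, Integrable (fun p => (e i * e j) * (p i * p j)) μ :=
    fun i j => (hint i j).const_mul _
  have hintf : Integrable (fun p => (p ⬝ᵥ e) ^ 2) μ := by
    have : Integrable (fun p => ∑ i, ∑ j, (e i * e j) * (p i * p j)) μ :=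
      integrable_finset_sum _ fun i _ => integrable_finset_sum _ fun j _ => hintij i j
    exact this.congr (ae_of_all _ fun p => (expand p).symm)
  -- compute the integral of the square
  have hI : ∫ p, (p ⬝ᵥ e) ^ 2 ∂μ = ∑ i, ∑ j, (e i * e j) * ∫ p, p i * p j ∂μ := by
    simp_rw [expand]
    rw [integral_finset_sum _ fun i _ => integrable_finset_sum _ fun j _ => hintij i j]
    refine Finset.sum_congr rfl fun i _ => ?_
    rw [integral_finset_sum _ fun j _ => hintij i j]
    exact Finset.sum_congr rfl fun j _ => MeasureTheory.integral_const_mul _ _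
  -- evaluate e ⬝ᵥ Q e two ways
  have h1 : e ⬝ᵥ Q.mulVec e = -(1/3) := by
    rw [heig, dotProduct_smul, he, smul_eq_mul, mul_one]
  have h2 : e ⬝ᵥ Q.mulVec e = (∑ i, ∑ j, (e i * e j) * ∫ p, p i * p j ∂μ) - 1/3 := by
    subst hQ
    simp only [dotProduct, mulVec, Matrix.of_apply, sub_mul, Finset.sum_sub_distrib,
      mul_sub, Finset.mul_sum]
    congr 1
    · exact Finset.sum_congr rfl fun i _ => Finset.sum_congr rfl fun j _ => by ring
    · have : ∀ i : Fin 3, ∑ j, e i * ((if i = j then (3:ℝ)⁻¹ else 0) * e j)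
          = e i * e i * 3⁻¹ := by
        intro i
        rw [Finset.sum_eq_single i]
        · simp; ring
        · intro j _ hj; simp [Ne.symm hj]
        · simp
      simp_rw [this]
      rw [← Finset.sum_mul]
      rw [show (∑ i, e i * e i) = e ⬝ᵥ e from rfl, he]
      norm_num
  have key : ∫ p, (p ⬝ᵥ e) ^ 2 ∂μ = 0 := by
    rw [hI]
    have := h1.symm.trans h2
    linarith
  have hzero : (fun p => (p ⬝ᵥ e) ^ 2) =ᵐ[μ] 0 :=
    (integral_eq_zero_iff_of_nonneg (fun p => sq_nonneg _) hintf).mp key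
  rw [← ae_iff]
  filter_upwards [hzero] with p hp
  exact pow_eq_zero_iff (by norm_num) |>.mp hp
end

section
/- Let μ be a Borel probability measure on S² with Q-tensor Q = ∫(p⊗p − (1/3)I)dμ(p). Then for n ∈ S², the function n ↦ ∫_{S²}|p⊗p − n⊗n|² dμ(p) equals 2(2/3 − Qn·n), and is minimized exactly when n is a unit eigenvector of Q corresponding to its largest eigenvalue. -/
/-
For unit vectors p and n, |p⊗p − n⊗n|² = |p|⁴ − 2(p·n)² + |n|⁴ = 2 − 2(p·n)², and the mean of
(p·n)² is Mn·n for the second-moment matrix M = Q + I/3; hence F(n) = 2(2/3 − Qn·n), and minimizing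
F on the sphere means maximizing the quadratic form of Q there. For symmetric Q, the bound
Qm·m ≤ r on the unit sphere says that rI − Q is positive semidefinite, i.e. that every eigenvalue
of Q is at most r. If n attains the maximum r, the quadratic form of the semidefinite matrix
rI − Q vanishes at n, so n lies in its kernel: Qn = rn.
-/

open Matrix MeasureTheory

namespace Matrix

variable {ι : Type*} [Fintype ι]

theorem forall_mulVec_dotProduct_le_iff_forall_unit (Q : Matrix ι ι ℝ) (r : ℝ) :
    (∀ x, Q *ᵥ x ⬝ᵥ x ≤ r * (x ⬝ᵥ x)) ↔ ∀ m, m ⬝ᵥ m = 1 → Q *ᵥ m ⬝ᵥ m ≤ r := by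
  refine ⟨fun h m hm => by simpa [hm] using h m, fun h x => ?_⟩
  rcases eq_or_ne x 0 with rfl | hx
  · simp
  set c := √(x ⬝ᵥ x)
  have hc : 0 < c := Real.sqrt_pos.mpr (dotProduct_self_star_pos_iff.mpr hx)
  have hcc : c ^ 2 = x ⬝ᵥ x := Real.sq_sqrt (dotProduct_self_star_nonneg x)
  have hunit := h (c⁻¹ • x) (by
    simp only [smul_dotProduct, dotProduct_smul, smul_eq_mul, ← hcc]; field_simp)
  simp only [mulVec_smul, smul_dotProduct, dotProduct_smul, smul_eq_mul] at hunit
  rw [← hcc]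
  have := mul_le_mul_of_nonneg_left hunit (sq_nonneg c)
  field_simp at this
  linarith

variable [DecidableEq ι]

theorem mem_spectrum_iff_exists_mulVec_eq_smul {K : Type*} [Field K] (A : Matrix ι ι K) (t : K) :
    t ∈ spectrum K A ↔ ∃ v ≠ 0, A *ᵥ v = t • v := by
  rw [← spectrum_toLin', ← Module.End.hasEigenvalue_iff_mem_spectrum]
  constructor
  · intro h
    obtain ⟨v, hv⟩ := h.exists_hasEigenvector
    exact ⟨v, hv.2, by simpa using Module.End.mem_eigenspace_iff.mp hv.1⟩
  · rintro ⟨v, hv, he⟩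
    exact Module.End.hasEigenvalue_of_hasEigenvector
      ⟨Module.End.mem_eigenspace_iff.mpr (by simpa using he), hv⟩

variable {Q : Matrix ι ι ℝ}

theorem IsHermitian.algebraMap_sub (hQ : Q.IsHermitian) (r : ℝ) :
    (algebraMap ℝ (Matrix ι ι ℝ) r - Q).IsHermitian := by
  simpa [algebraMap_eq_diagonal] using (isHermitian_diagonal _).sub hQ

theorem posSemidef_algebraMap_sub_iff_forall_spectrum_le (hQ : Q.IsHermitian) (r : ℝ) :
    (algebraMap ℝ (Matrix ι ι ℝ) r - Q).PosSemidef ↔ ∀ t ∈ spectrum ℝ Q, t ≤ r := by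
  rw [posSemidef_iff_isHermitian_and_spectrum_nonneg, ← spectrum.singleton_sub_eq,
    and_iff_right (hQ.algebraMap_sub r)]
  simp [Set.subset_def]

theorem posSemidef_algebraMap_sub_iff_forall_le (hQ : Q.IsHermitian) (r : ℝ) :
    (algebraMap ℝ (Matrix ι ι ℝ) r - Q).PosSemidef ↔ ∀ x, Q *ᵥ x ⬝ᵥ x ≤ r * (x ⬝ᵥ x) := by
  rw [posSemidef_iff_dotProduct_mulVec, and_iff_right (hQ.algebraMap_sub r)]
  refine forall_congr' fun x => ?_
  simp [sub_mulVec, Algebra.algebraMap_eq_smul_one, smul_mulVec, dotProduct_comm x]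

theorem IsHermitian.isMaxOn_mulVec_dotProduct_iff (hQ : Q.IsHermitian) {n : ι → ℝ}
    (hn : n ⬝ᵥ n = 1) :
    IsMaxOn (fun m => Q *ᵥ m ⬝ᵥ m) {m | m ⬝ᵥ m = 1} n ↔
      ∃ lam, IsGreatest (spectrum ℝ Q) lam ∧ Q *ᵥ n = lam • n := by
  constructor
  · intro hmax
    set r := Q *ᵥ n ⬝ᵥ n
    have hpsd : (algebraMap ℝ (Matrix ι ι ℝ) r - Q).PosSemidef :=
      (posSemidef_algebraMap_sub_iff_forall_le hQ r).2
        ((forall_mulVec_dotProduct_le_iff_forall_unit Q r).2 fun m hm => hmax hm)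
    have heig : Q *ᵥ n = r • n := by
      have hker := (hpsd.dotProduct_mulVec_zero_iff n).1 (by
        simp [sub_mulVec, Algebra.algebraMap_eq_smul_one, smul_mulVec, hn, r, dotProduct_comm n])
      rw [sub_mulVec, Algebra.algebraMap_eq_smul_one, smul_mulVec, one_mulVec] at hker
      exact (sub_eq_zero.1 hker).symm
    have hn0 : n ≠ 0 := by rintro rfl; simp at hn
    exact ⟨r, ⟨(mem_spectrum_iff_exists_mulVec_eq_smul Q r).2 ⟨n, hn0, heig⟩,
      (posSemidef_algebraMap_sub_iff_forall_spectrum_le hQ r).1 hpsd⟩, heig⟩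
  · rintro ⟨lam, ⟨-, hlam⟩, heig⟩ m hm
    have hn_lam : Q *ᵥ n ⬝ᵥ n = lam := by rw [heig, smul_dotProduct, hn, smul_eq_mul, mul_one]
    show Q *ᵥ m ⬝ᵥ m ≤ Q *ᵥ n ⬝ᵥ n
    rw [hn_lam]
    exact (forall_mulVec_dotProduct_le_iff_forall_unit Q lam).1
      ((posSemidef_algebraMap_sub_iff_forall_le hQ lam).1
        ((posSemidef_algebraMap_sub_iff_forall_spectrum_le hQ lam).2 hlam)) m hm

end Matrix

section SecondMoment

variable {ι : Type*} [Fintype ι]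

theorem dotProduct_sq_eq_sum_sum (p n : ι → ℝ) :
    (p ⬝ᵥ n) ^ 2 = ∑ i, ∑ j, n i * n j * (p i * p j) := by
  simp only [sq, dotProduct, Finset.sum_mul_sum]
  exact Finset.sum_congr rfl fun i _ => Finset.sum_congr rfl fun j _ => by ring

theorem sum_sum_sq_mul_sub_mul (p n : ι → ℝ) :
    ∑ i, ∑ j, (p i * p j - n i * n j) ^ 2 = (p ⬝ᵥ p) ^ 2 - 2 * (p ⬝ᵥ n) ^ 2 + (n ⬝ᵥ n) ^ 2 := by
  simp only [dotProduct_sq_eq_sum_sum, Finset.mul_sum, ← Finset.sum_sub_distrib,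
    ← Finset.sum_add_distrib]
  exact Finset.sum_congr rfl fun i _ => Finset.sum_congr rfl fun j _ => by ring

noncomputable def secondMomentMatrix (μ : Measure (ι → ℝ)) : Matrix ι ι ℝ :=
  of fun i j => ∫ p, p i * p j ∂μ

variable {μ : Measure (ι → ℝ)}

theorem integrable_mul_apply_of_ae_dotProduct_self_eq_one [IsFiniteMeasure μ]
    (hμ : ∀ᵐ p ∂μ, p ⬝ᵥ p = 1) (i j : ι) : Integrable (fun p => p i * p j) μ := by
  refine .of_bound (by fun_prop) 1 ?_
  filter_upwards [hμ] with p hp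
  have hle : ∀ k, |p k| ≤ 1 := fun k => abs_le_one_iff_mul_self_le_one.2 <|
    hp ▸ Finset.single_le_sum (fun l _ => mul_self_nonneg (p l)) (Finset.mem_univ k)
  rw [Real.norm_eq_abs, abs_mul]
  exact mul_le_one₀ (hle i) (abs_nonneg _) (hle j)

theorem integrable_dotProduct_sq (hμ : ∀ i j, Integrable (fun p => p i * p j) μ) (n : ι → ℝ) :
    Integrable (fun p => (p ⬝ᵥ n) ^ 2) μ := by
  simp only [dotProduct_sq_eq_sum_sum]
  exact integrable_finsetSum _ fun i _ => integrable_finsetSum _ fun j _ => (hμ i j).const_mul _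

theorem integral_dotProduct_sq (hμ : ∀ i j, Integrable (fun p => p i * p j) μ) (n : ι → ℝ) :
    ∫ p, (p ⬝ᵥ n) ^ 2 ∂μ = secondMomentMatrix μ *ᵥ n ⬝ᵥ n := by
  simp only [dotProduct_sq_eq_sum_sum]
  rw [integral_finsetSum _ fun i _ => integrable_finsetSum _ fun j _ => (hμ i j).const_mul _]
  simp only [integral_finsetSum _ fun j _ => (hμ _ j).const_mul _, integral_const_mul,
    secondMomentMatrix, mulVec, dotProduct, of_apply, Finset.sum_mul]
  exact Finset.sum_congr rfl fun i _ => Finset.sum_congr rfl fun j _ => by ring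

theorem integral_sum_sum_sq_mul_sub_mul [IsProbabilityMeasure μ] (hμ : ∀ᵐ p ∂μ, p ⬝ᵥ p = 1)
    {n : ι → ℝ} (hn : n ⬝ᵥ n = 1) :
    ∫ p, ∑ i, ∑ j, (p i * p j - n i * n j) ^ 2 ∂μ = 2 - 2 * (secondMomentMatrix μ *ᵥ n ⬝ᵥ n) := by
  have hint := integrable_mul_apply_of_ae_dotProduct_self_eq_one hμ
  have hpt : ∀ᵐ p ∂μ, ∑ i, ∑ j, (p i * p j - n i * n j) ^ 2 = 2 - 2 * (p ⬝ᵥ n) ^ 2 := by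
    filter_upwards [hμ] with p hp
    rw [sum_sum_sq_mul_sub_mul, hp, hn]
    ring
  rw [integral_congr_ae hpt,
    integral_sub (integrable_const _) ((integrable_dotProduct_sq hint n).const_mul _),
    integral_const_mul, integral_dotProduct_sq hint]
  simp

end SecondMoment

theorem director_minimizes_mean_distance (μ : Measure (Fin 3 → ℝ))
    [IsProbabilityMeasure μ] (hsph : μ {p | p ⬝ᵥ p = 1} = 1)
    (Q : Matrix (Fin 3) (Fin 3) ℝ)
    (hQ : Q = Matrix.of fun i j =>
      (∫ p, p i * p j ∂μ) - if i = j then (3:ℝ)⁻¹ else 0)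
    (F : (Fin 3 → ℝ) → ℝ)
    (hF : F = fun n => ∫ p, ∑ i, ∑ j, (p i * p j - n i * n j) ^ 2 ∂μ)
    (n : Fin 3 → ℝ) (hn : n ⬝ᵥ n = 1) :
    F n = 2 * (2/3 - Q.mulVec n ⬝ᵥ n) ∧
    ((∀ m : Fin 3 → ℝ, m ⬝ᵥ m = 1 → F n ≤ F m) ↔
      ∃ lam : ℝ, IsGreatest {t : ℝ | ∃ v : Fin 3 → ℝ, v ≠ 0 ∧ Q.mulVec v = t • v} lam ∧
        Q.mulVec n = lam • n) := by
  have hμ : ∀ᵐ p ∂μ, p ⬝ᵥ p = 1 := by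
    rwa [ae_iff_measure_eq (by measurability), measure_univ]
  have hQ' : Q = secondMomentMatrix μ - algebraMap ℝ _ (3⁻¹) := by
    ext i j
    simp [hQ, secondMomentMatrix, algebraMap_matrix_apply]
  have hQherm : Q.IsHermitian := by
    ext i j
    simp [hQ, mul_comm, eq_comm]
  have hFQ : ∀ m : Fin 3 → ℝ, m ⬝ᵥ m = 1 → F m = 2 * (2/3 - Q *ᵥ m ⬝ᵥ m) := fun m hm => by
    simp only [hF]
    rw [integral_sum_sum_sq_mul_sub_mul hμ hm, hQ', sub_mulVec,
      Algebra.algebraMap_eq_smul_one, smul_mulVec, one_mulVec, sub_dotProduct, smul_dotProduct, hm]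
    ring
  have hspec : {t : ℝ | ∃ v : Fin 3 → ℝ, v ≠ 0 ∧ Q *ᵥ v = t • v} = spectrum ℝ Q :=
    Set.ext fun t => (mem_spectrum_iff_exists_mulVec_eq_smul Q t).symm
  refine ⟨hFQ n hn, ?_⟩
  rw [hspec, ← hQherm.isMaxOn_mulVec_dotProduct_iff hn, isMaxOn_iff]
  refine forall₂_congr fun m hm => ?_
  rw [hFQ m hm, hFQ n hn]
  exact ⟨fun h => by linarith, fun h => by linarith⟩
end

section
/- Among curves m ∈ W^{1,2}((−1,1), S²) with m(−1) = e₂ and m(1) = −e₂, the minimum value of ∫_{−1}^{1}|m'(t)|² dt is π²/2. -/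
/-!
Integrating the pointwise AM–GM inequality `2 c ‖g‖ ≤ ‖g‖² + c²` with `c = π/2` gives
`π ∫ ‖g‖ ≤ E + π²/2`, so it suffices that every admissible curve has length `∫ ‖g‖ ≥ π`, the
angle between its antipodal endpoints. Since `‖m t - m s‖ ≤ ∫_s^t ‖g‖` and the angle between
nearby unit vectors is at most `1 + o(1)` times their distance, continuous induction along the
curve with the triangle inequality for angles bounds the angle between `m a` and `m t` by
`K ∫_a^t ‖g‖` for every `K > 1`. The half great circle from `e₂` through `e₁`, traversed at
constant speed `π/2`, attains equality.
-/

open MeasureTheory Set Filter Topology Real InnerProductGeometry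
open scoped RealInnerProductSpace

lemma Real.mul_cos_le_sin {x : ℝ} (h0 : 0 ≤ x) (h1 : x ≤ π / 2) : x * cos x ≤ sin x := by
  rcases h1.lt_or_eq with h1 | rfl
  · have hcos : 0 < cos x := cos_pos_of_mem_Ioo ⟨by linarith [pi_pos], h1⟩
    have hx := le_tan h0 h1
    rwa [tan_eq_sin_div_cos, le_div_iff₀ hcos] at hx
  · simp

lemma ContinuousOn.of_norm_sub_le_sub {α E : Type*} [LinearOrder α] [TopologicalSpace α]
    [SeminormedAddCommGroup E] {f : α → E} {ℓ : α → ℝ} {s : Set α} (hℓ : ContinuousOn ℓ s)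
    (hfℓ : ∀ x ∈ s, ∀ y ∈ s, x ≤ y → ‖f y - f x‖ ≤ ℓ y - ℓ x) : ContinuousOn f s := by
  intro x hx
  rw [ContinuousWithinAt, tendsto_iff_norm_sub_tendsto_zero]
  refine squeeze_zero_norm' ?_ (tendsto_iff_norm_sub_tendsto_zero.1 (hℓ x hx))
  filter_upwards [self_mem_nhdsWithin] with y hy
  rw [norm_norm, Real.norm_eq_abs]
  rcases le_total y x with hyx | hxy
  · rw [norm_sub_rev, abs_sub_comm]
    exact (hfℓ y hy x hx hyx).trans (le_abs_self _)
  · exact (hfℓ x hx y hy hxy).trans (le_abs_self _)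

variable {V : Type*} [NormedAddCommGroup V] [InnerProductSpace ℝ V]

namespace InnerProductGeometry

/-- With `u` half the angle, the chord is `2 sin u` and this is `u cos u ≤ sin u`. -/
lemma angle_sq_mul_le_norm_sub_sq {x y : V} (hx : ‖x‖ = 1) (hy : ‖y‖ = 1) :
    angle x y ^ 2 * (1 - ‖x - y‖ ^ 2 / 4) ≤ ‖x - y‖ ^ 2 := by
  obtain ⟨u, hu⟩ : ∃ u, angle x y = 2 * u := ⟨angle x y / 2, by ring⟩
  have hu0 : 0 ≤ u := by linarith [angle_nonneg x y]
  have hu1 : u ≤ π / 2 := by linarith [angle_le_pi x y]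
  have hchord : ‖x - y‖ ^ 2 = 4 * sin u ^ 2 := by
    rw [sq, norm_sub_sq_eq_norm_sq_add_norm_sq_sub_two_mul_norm_mul_norm_mul_cos_angle, hx, hy,
      hu, cos_two_mul]
    nlinarith [sin_sq_add_cos_sq u]
  have hkey : (u * cos u) ^ 2 ≤ sin u ^ 2 :=
    pow_le_pow_left₀ (mul_nonneg hu0 (cos_nonneg_of_mem_Icc ⟨by linarith [pi_pos], hu1⟩))
      (mul_cos_le_sin hu0 hu1) 2
  rw [hchord, hu]
  nlinarith [sin_sq_add_cos_sq u]

lemma exists_angle_le_mul_norm_sub {K : ℝ} (hK : 1 < K) :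
    ∃ η > 0, ∀ x y : V, ‖x‖ = 1 → ‖y‖ = 1 → ‖x - y‖ ≤ η → angle x y ≤ K * ‖x - y‖ := by
  have hK₀ : 0 < K := zero_lt_one.trans hK
  have hK' : 0 < 1 - K⁻¹ ^ 2 := by
    have hK_inv : K⁻¹ < 1 := inv_lt_one_of_one_lt₀ hK
    nlinarith [inv_pos.2 hK₀]
  refine ⟨2 * √(1 - K⁻¹ ^ 2), by positivity, fun x y hx hy hxy => ?_⟩
  have hsq : ‖x - y‖ ^ 2 ≤ 4 * (1 - K⁻¹ ^ 2) := by
    calc ‖x - y‖ ^ 2 ≤ (2 * √(1 - K⁻¹ ^ 2)) ^ 2 := pow_le_pow_left₀ (norm_nonneg _) hxy 2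
      _ = 4 * (1 - K⁻¹ ^ 2) := by rw [mul_pow, sq_sqrt hK'.le]; ring
  have hchord := angle_sq_mul_le_norm_sub_sq hx hy
  have hsq_le : (K⁻¹ * angle x y) ^ 2 ≤ ‖x - y‖ ^ 2 := by
    nlinarith [sq_nonneg (angle x y)]
  have hle := (pow_le_pow_iff_left₀ (by positivity [angle_nonneg x y]) (norm_nonneg _)
    two_ne_zero).1 hsq_le
  rwa [inv_mul_le_iff₀ hK₀] at hle

section Curve

variable {m : ℝ → V} {ℓ : ℝ → ℝ} {a b : ℝ}

theorem angle_le_mul_sub_of_norm_sub_le (hab : a ≤ b) (hℓ : ContinuousOn ℓ (Icc a b))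
    (hm : ∀ t ∈ Icc a b, ‖m t‖ = 1)
    (hmℓ : ∀ s ∈ Icc a b, ∀ t ∈ Icc a b, s ≤ t → ‖m t - m s‖ ≤ ℓ t - ℓ s)
    {K : ℝ} (hK : 1 < K) : angle (m a) (m b) ≤ K * (ℓ b - ℓ a) := by
  have ha : a ∈ Icc a b := left_mem_Icc.2 hab
  have hne : ∀ t ∈ Icc a b, m t ≠ 0 := fun t ht => norm_ne_zero_iff.1 (by simp [hm t ht])
  have hm_cont : ContinuousOn m (Icc a b) := hℓ.of_norm_sub_le_sub hmℓ
  have hangle_cont : ContinuousOn (fun t => angle (m a) (m t)) (Icc a b) := fun t ht =>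
    (continuousAt_angle (x := (m a, m t)) (hne a ha) (hne t ht)).comp_continuousWithinAt
      (f := fun s => (m a, m s)) (continuousWithinAt_const.prodMk (hm_cont t ht))
  obtain ⟨η, hη, hloc⟩ := exists_angle_le_mul_norm_sub (V := V) hK
  let S := {t | angle (m a) (m t) ≤ K * (ℓ t - ℓ a)}
  have hS : IsClosed (S ∩ Icc a b) := by
    rw [inter_comm]
    exact isClosed_Icc.isClosed_le hangle_cont ((hℓ.sub continuousOn_const).const_smul K)
  refine hS.Icc_subset_of_forall_mem_nhdsWithin (by simp [S, angle_self (hne a ha)]) ?_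
    (right_mem_Icc.2 hab)
  rintro t ⟨htS, htab⟩
  have ht : t ∈ Icc a b := Ico_subset_Icc_self htab
  have hℓt : ∀ᶠ s in 𝓝[>] t, ℓ s < ℓ t + η :=
    ((hℓ t ht).mono_of_mem_nhdsWithin (Icc_mem_nhdsGT_of_mem htab)).eventually
      (gt_mem_nhds (lt_add_of_pos_right _ hη))
  filter_upwards [hℓt, Ioo_mem_nhdsGT htab.2] with s hsη hs
  have hs' : s ∈ Icc a b := ⟨htab.1.trans hs.1.le, hs.2.le⟩
  have hstep := hmℓ t ht s hs' hs.1.le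
  calc angle (m a) (m s) ≤ angle (m a) (m t) + angle (m t) (m s) :=
        angle_le_angle_add_angle _ _ _
    _ ≤ K * (ℓ t - ℓ a) + K * ‖m s - m t‖ := by
        gcongr
        · exact htS
        · rw [norm_sub_rev]
          exact hloc _ _ (hm t ht) (hm s hs') (by rw [norm_sub_rev]; linarith)
    _ ≤ K * (ℓ s - ℓ a) := by nlinarith

theorem angle_le_sub_of_norm_sub_le (hab : a ≤ b) (hℓ : ContinuousOn ℓ (Icc a b))
    (hm : ∀ t ∈ Icc a b, ‖m t‖ = 1)
    (hmℓ : ∀ s ∈ Icc a b, ∀ t ∈ Icc a b, s ≤ t → ‖m t - m s‖ ≤ ℓ t - ℓ s) :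
    angle (m a) (m b) ≤ ℓ b - ℓ a := by
  have hlim : Tendsto (fun K => K * (ℓ b - ℓ a)) (𝓝[>] 1) (𝓝 (ℓ b - ℓ a)) := by
    simpa using ((continuous_mul_const (ℓ b - ℓ a)).tendsto 1).mono_left nhdsWithin_le_nhds
  exact ge_of_tendsto hlim (eventually_nhdsWithin_of_forall
    fun K hK => angle_le_mul_sub_of_norm_sub_le hab hℓ hm hmℓ hK)

theorem angle_le_integral_norm {g : ℝ → V} (hab : a ≤ b) (hg : IntegrableOn g (Ioc a b))
    (hm : ∀ t ∈ Icc a b, m t = m a + ∫ s in Ioc a t, g s) (hnorm : ∀ t ∈ Icc a b, ‖m t‖ = 1) :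
    angle (m a) (m b) ≤ ∫ t in Ioc a b, ‖g t‖ := by
  have hgi : IntervalIntegrable g volume a b :=
    (intervalIntegrable_iff_integrableOn_Ioc_of_le hab).2 hg
  have hgi' : ∀ t ∈ Icc a b, IntervalIntegrable g volume a t := fun t ht =>
    hgi.mono_set (uIcc_subset_uIcc_left (by rwa [uIcc_of_le hab]))
  have hm' : ∀ t ∈ Icc a b, m t = m a + ∫ s in a..t, g s := fun t ht => by
    rw [intervalIntegral.integral_of_le ht.1]; exact hm t ht
  have hℓ : ContinuousOn (fun t => ∫ s in a..t, ‖g s‖) (Icc a b) := by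
    simpa [uIcc_of_le hab] using
      intervalIntegral.continuousOn_primitive_interval' hgi.norm left_mem_uIcc
  have hmℓ : ∀ s ∈ Icc a b, ∀ t ∈ Icc a b, s ≤ t →
      ‖m t - m s‖ ≤ (∫ u in a..t, ‖g u‖) - ∫ u in a..s, ‖g u‖ := by
    intro s hs t ht hst
    rw [hm' t ht, hm' s hs, add_sub_add_left_eq_sub,
      intervalIntegral.integral_interval_sub_left (hgi' t ht) (hgi' s hs),
      intervalIntegral.integral_interval_sub_left (hgi' t ht).norm (hgi' s hs).norm]
    exact intervalIntegral.norm_integral_le_integral_norm hst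
  simpa [intervalIntegral.integral_of_le hab] using angle_le_sub_of_norm_sub_le hab hℓ hnorm hmℓ

end Curve

end InnerProductGeometry

theorem pi_sq_div_le_integral_norm_sq {m g : ℝ → V} {a b : ℝ} (hab : a < b)
    (hg : MemLp g 2 (volume.restrict (Ioc a b)))
    (hm : ∀ t ∈ Icc a b, m t = m a + ∫ s in Ioc a t, g s)
    (hnorm : ∀ t ∈ Icc a b, ‖m t‖ = 1) (hend : m b = -m a) :
    π ^ 2 / (b - a) ≤ ∫ t in Ioc a b, ‖g t‖ ^ 2 := by
  have hlength : π ≤ ∫ t in Ioc a b, ‖g t‖ := by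
    have hangle := angle_le_integral_norm hab.le (hg.integrable one_le_two) hm hnorm
    rwa [hend, angle_self_neg_of_nonzero
      (norm_ne_zero_iff.1 (by simp [hnorm a ⟨le_rfl, hab.le⟩]))] at hangle
  set c := π / (b - a)
  have hc : 0 ≤ c := by have := sub_pos.2 hab; positivity
  -- `c` is the constant speed of a curve of length `π`, for which this is an equality
  have hamgm : ∫ t in Ioc a b, 2 * c * ‖g t‖ ≤ ∫ t in Ioc a b, (‖g t‖ ^ 2 + c ^ 2) :=
    integral_mono ((hg.integrable one_le_two).norm.const_mul _)
      ((hg.integrable_norm_pow two_ne_zero).add (integrable_const _))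
      fun t => by nlinarith [sq_nonneg (‖g t‖ - c)]
  rw [integral_const_mul, integral_add (hg.integrable_norm_pow two_ne_zero) (integrable_const _),
    setIntegral_const, Real.volume_real_Ioc_of_le hab.le, smul_eq_mul] at hamgm
  have hcba : c * (b - a) = π := div_mul_cancel₀ _ (sub_pos.2 hab).ne'
  have hcπ : π ^ 2 / (b - a) = c * π := by rw [← hcba]; field_simp
  nlinarith

section GreatCircle

variable (u v : V)

noncomputable def greatCircle (θ : ℝ) : V := cos θ • u + sin θ • v

@[simp] lemma greatCircle_zero : greatCircle u v 0 = u := by simp [greatCircle]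

@[simp] lemma greatCircle_pi : greatCircle u v π = -u := by simp [greatCircle]

@[fun_prop] lemma continuous_greatCircle : Continuous (greatCircle u v) := by
  unfold greatCircle; fun_prop

lemma hasDerivAt_greatCircle (θ : ℝ) :
    HasDerivAt (greatCircle u v) (greatCircle v (-u) θ) θ := by
  have h := ((hasDerivAt_cos θ).smul_const u).add ((hasDerivAt_sin θ).smul_const v)
  rwa [show greatCircle v (-u) θ = -sin θ • u + cos θ • v by
    simp only [greatCircle, smul_neg, neg_smul]; abel]

variable {u v}

lemma norm_greatCircle (hu : ‖u‖ = 1) (hv : ‖v‖ = 1) (huv : ⟪u, v⟫ = 0) (θ : ℝ) :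
    ‖greatCircle u v θ‖ = 1 := by
  have hsq : ‖greatCircle u v θ‖ ^ 2 = 1 := by
    rw [greatCircle, norm_add_sq_real, norm_smul, norm_smul, real_inner_smul_left,
      real_inner_smul_right, huv, hu, hv, Real.norm_eq_abs, Real.norm_eq_abs]
    nlinarith [sin_sq_add_cos_sq θ, sq_abs (sin θ), sq_abs (cos θ)]
  exact (pow_eq_one_iff_of_nonneg (norm_nonneg _) two_ne_zero).1 hsq

end GreatCircle

theorem exists_antipodal_curve_integral_norm_sq_eq [CompleteSpace V] {u v : V} (hu : ‖u‖ = 1)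
    (hv : ‖v‖ = 1) (huv : ⟪u, v⟫ = 0) {a b : ℝ} (hab : a < b) :
    ∃ m g : ℝ → V, MemLp g 2 (volume.restrict (Ioc a b)) ∧
      (∀ t ∈ Icc a b, m t = m a + ∫ s in Ioc a t, g s) ∧ (∀ t, ‖m t‖ = 1) ∧
      m a = u ∧ m b = -u ∧ ∫ t in Ioc a b, ‖g t‖ ^ 2 = π ^ 2 / (b - a) := by
  have hba : 0 < b - a := sub_pos.2 hab
  set c := π / (b - a) with hc_def
  have hc : 0 ≤ c := by positivity
  set m : ℝ → V := fun t => greatCircle u v (c * (t - a))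
  set g : ℝ → V := fun t => c • greatCircle v (-u) (c * (t - a))
  have hderiv : ∀ t, HasDerivAt m (g t) t := fun t => by
    have hlin : HasDerivAt (fun s => c * (s - a)) c t := by
      simpa using ((hasDerivAt_id t).sub_const a).const_mul c
    exact (hasDerivAt_greatCircle u v _).scomp t hlin
  have hg_cont : Continuous g := by fun_prop
  have hg_norm : ∀ t, ‖g t‖ = c := fun t => by
    rw [norm_smul, norm_greatCircle hv (by rwa [norm_neg])
      (by rw [inner_neg_right, real_inner_comm, huv, neg_zero]), Real.norm_of_nonneg hc, mul_one]
  refine ⟨m, g, MemLp.of_bound hg_cont.aestronglyMeasurable c (ae_of_all _ (hg_norm · |>.le)),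
    fun t ht => ?_, fun t => norm_greatCircle hu hv huv _, by simp [m], ?_, ?_⟩
  · rw [← intervalIntegral.integral_of_le ht.1, intervalIntegral.integral_eq_sub_of_hasDerivAt
      (fun s _ => hderiv s) (hg_cont.intervalIntegrable _ _)]
    abel
  · simp [m, c, div_mul_cancel₀ _ hba.ne']
  · simp_rw [hg_norm]
    rw [setIntegral_const, Real.volume_real_Ioc_of_le hab.le, smul_eq_mul, hc_def]
    field_simp

/-- A `W^{1,2}` curve is given by its continuous representative `m` and its weak derivative `g`. -/
theorem min_energy_antipodal_curves :
    IsLeast {E : ℝ | ∃ m g : ℝ → EuclideanSpace ℝ (Fin 3),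
        MemLp g 2 (volume.restrict (Set.Ioc (-1 : ℝ) 1)) ∧
        (∀ t ∈ Set.Icc (-1 : ℝ) 1, m t = m (-1) + ∫ s in Set.Ioc (-1 : ℝ) t, g s) ∧
        (∀ t ∈ Set.Icc (-1 : ℝ) 1, ‖m t‖ = 1) ∧
        m (-1) = EuclideanSpace.single 1 1 ∧
        m 1 = -EuclideanSpace.single 1 1 ∧
        E = ∫ t in Set.Ioc (-1 : ℝ) 1, ‖g t‖ ^ 2}
      (Real.pi ^ 2 / 2) := by
  have h_length : (1 : ℝ) - (-1) = 2 := by norm_num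
  constructor
  · obtain ⟨m, g, hg, hm, hnorm, hstart, hend, hE⟩ :=
      exists_antipodal_curve_integral_norm_sq_eq (u := EuclideanSpace.single (1 : Fin 3) (1 : ℝ))
        (v := EuclideanSpace.single 0 1) (by simp) (by simp)
        (by simp [EuclideanSpace.inner_single_left]) (by norm_num : (-1 : ℝ) < 1)
    exact ⟨m, g, hg, hm, fun t _ => hnorm t, hstart, hend, by rw [hE, h_length]⟩
  · rintro E ⟨m, g, hg, hm, hnorm, hstart, hend, rfl⟩
    simpa [h_length] using
      pi_sq_div_le_integral_norm_sq (by norm_num) hg hm hnorm (by rw [hend, hstart])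
end
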